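/- Let (E_n)_{n∈ℕ} be a real sequence and (a_n)_{n∈ℕ} a real sequence, and fix E ∈ ℝ. Suppose there is ε₀ > 0 such that both ∑_n exp(−(E_n−E)²/(2ε₀²)) and ∑_n |a_n| · exp(−(E_n−E)²/(2ε₀²)) converge. Let d = min_n |E_n − E|, and suppose the set M = {n : |E_n − E| = d} is finite and nonempty, with d attained. Then, as ε → 0 from the right, the ratio (∑_n a_n · exp(−(E_n−E)²/(2ε²))) / (∑_n exp(−(E_n−E)²/(2ε²))) tends to (1/|M|) · ∑_{n∈M} a_n, i.e. the Gaussian-ensemble expectation value converges to the microcanonical average over the energy eigenstates nearest to E. -/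

import Mathlib

open Real Filter

/-- The Gaussian-ensemble expectation value tends, as ε → 0⁺, to the
microcanonical average over the energy eigenstates nearest to `E`. -/
theorem gaussian_ensemble_tendsto_microcanonical
    (En a : ℕ → ℝ) (E : ℝ) (ε₀ : ℝ) (hε₀ : 0 < ε₀)
    (h1 : Summable fun n => Real.exp (-(En n - E) ^ 2 / (2 * ε₀ ^ 2)))
    (h2 : Summable fun n => |a n| * Real.exp (-(En n - E) ^ 2 / (2 * ε₀ ^ 2)))
    (d : ℝ) (hd : ∀ n, d ≤ |En n - E|) (hd' : ∃ n, |En n - E| = d)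
    (M : Finset ℕ) (hM : ∀ n, n ∈ M ↔ |En n - E| = d) (hMne : M.Nonempty) :
    Tendsto
      (fun ε : ℝ =>
        (∑' n, a n * Real.exp (-(En n - E) ^ 2 / (2 * ε ^ 2))) /
          (∑' n, Real.exp (-(En n - E) ^ 2 / (2 * ε ^ 2))))
      (nhdsWithin 0 (Set.Ioi 0))
      (nhds ((1 / (M.card : ℝ)) * ∑ n ∈ M, a n)) := by
  have hd0 : 0 ≤ d := by
    obtain ⟨n, hn⟩ := hd'; rw [← hn]; exact abs_nonneg _
  -- X n ≥ 0
  have hX : ∀ n, 0 ≤ (En n - E) ^ 2 - d ^ 2 := by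
    intro n
    have : d ^ 2 ≤ (En n - E) ^ 2 := by
      rw [← sq_abs (En n - E)]
      exact pow_le_pow_left₀ hd0 (hd n) 2
    linarith
  set g : ℝ → ℕ → ℝ := fun ε n => Real.exp (-((En n - E) ^ 2 - d ^ 2) / (2 * ε ^ 2)) with hg
  -- factorization
  have hfact : ∀ (ε : ℝ) (n : ℕ),
      Real.exp (-(En n - E) ^ 2 / (2 * ε ^ 2)) =
        Real.exp (-d ^ 2 / (2 * ε ^ 2)) * g ε n := by
    intro ε n
    rw [hg, ← Real.exp_add, ← add_div]
    ring_nf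
  -- bound: g ε n ≤ g ε₀ n for 0 < ε ≤ ε₀
  have hbound : ∀ ε : ℝ, 0 < ε → ε ≤ ε₀ → ∀ n, g ε n ≤ g ε₀ n := by
    intro ε hε hεε n
    apply Real.exp_le_exp.2
    rw [neg_div, neg_div, neg_le_neg_iff]
    have h2ε : (0:ℝ) < 2 * ε ^ 2 := by positivity
    have h2ε' : 2 * ε ^ 2 ≤ 2 * ε₀ ^ 2 := by nlinarith
    exact div_le_div_of_nonneg_left (hX n) h2ε h2ε'
  -- limit functions
  set g0 : ℕ → ℝ := fun n => if n ∈ M then 1 else 0 with hg0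
  -- pointwise convergence
  have hpt : ∀ n, Tendsto (fun ε => g ε n) (nhdsWithin 0 (Set.Ioi 0)) (nhds (g0 n)) := by
    intro n
    by_cases hn : n ∈ M
    · have hx0 : (En n - E) ^ 2 - d ^ 2 = 0 := by
        have := (hM n).1 hn
        rw [← sq_abs (En n - E), this]; ring
      have hconst : (fun ε : ℝ => g ε n) = fun _ => 1 := by
        funext ε; rw [hg]; simp only []
        rw [hx0, neg_zero, zero_div, Real.exp_zero]
      rw [hg0]; simp only [if_pos hn]
      rw [hconst]; exact tendsto_const_nhds
    · have hx : 0 < (En n - E) ^ 2 - d ^ 2 := by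
        rcases lt_or_eq_of_le (hX n) with h | h
        · exact h
        · exfalso; apply hn; rw [hM]
          have hsq : (En n - E) ^ 2 = d ^ 2 := by linarith
          exact le_antisymm (by nlinarith [sq_abs (En n - E), hd n, hd0]) (hd n)
      simp only [hg0, if_neg hn]
      have h1' : Tendsto (fun ε : ℝ => 2 * ε ^ 2) (nhdsWithin 0 (Set.Ioi 0))
          (nhdsWithin 0 (Set.Ioi 0)) := by
        apply tendsto_nhdsWithin_of_tendsto_nhds_of_eventually_within
        · have hc : Continuous fun ε : ℝ => 2 * ε ^ 2 :=
            continuous_const.mul (continuous_pow 2)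
          simpa using (hc.tendsto 0).mono_left nhdsWithin_le_nhds
        · filter_upwards [self_mem_nhdsWithin] with ε (hε : 0 < ε)
          exact Set.mem_Ioi.2 (by positivity)
      have h2' : Tendsto (fun ε : ℝ => ((En n - E) ^ 2 - d ^ 2) / (2 * ε ^ 2))
          (nhdsWithin 0 (Set.Ioi 0)) atTop := by
        simp only [div_eq_mul_inv]
        exact Tendsto.const_mul_atTop hx h1'.inv_tendsto_nhdsGT_zero
      have h3' : Tendsto (fun ε : ℝ => -((En n - E) ^ 2 - d ^ 2) / (2 * ε ^ 2))
          (nhdsWithin 0 (Set.Ioi 0)) atBot := by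
        simp only [neg_div]
        exact tendsto_neg_atTop_atBot.comp h2'
      exact Real.tendsto_exp_atBot.comp h3'
  -- tsums of limit functions
  have htsumg0 : ∑' n, g0 n = (M.card : ℝ) := by
    rw [tsum_eq_sum (s := M) (by intro n hn; simp [hg0, hn])]
    simp [hg0]
  have htsumag0 : ∑' n, a n * g0 n = ∑ n ∈ M, a n := by
    rw [tsum_eq_sum (s := M) (by intro n hn; simp [hg0, hn])]
    exact Finset.sum_congr rfl (by intro n hn; simp [hg0, hn])
  -- summable bounds
  have hsum1 : Summable (g ε₀) := by
    have : (g ε₀) = fun n => Real.exp (d ^ 2 / (2 * ε₀ ^ 2)) *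
        Real.exp (-(En n - E) ^ 2 / (2 * ε₀ ^ 2)) := by
      funext n; simp only [hg]; rw [← Real.exp_add, ← add_div]; congr 1; ring
    rw [this]; exact h1.mul_left _
  have hsum2 : Summable (fun n => |a n| * g ε₀ n) := by
    have : (fun n => |a n| * g ε₀ n) = fun n => Real.exp (d ^ 2 / (2 * ε₀ ^ 2)) *
        (|a n| * Real.exp (-(En n - E) ^ 2 / (2 * ε₀ ^ 2))) := by
      funext n
      rw [show g ε₀ n = Real.exp (d ^ 2 / (2 * ε₀ ^ 2)) *
        Real.exp (-(En n - E) ^ 2 / (2 * ε₀ ^ 2)) by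
          simp only [hg]; rw [← Real.exp_add, ← add_div]; congr 1; ring]
      ring
    rw [this]; exact h2.mul_left _
  have hev : ∀ᶠ ε in nhdsWithin (0:ℝ) (Set.Ioi 0), 0 < ε ∧ ε ≤ ε₀ := by
    filter_upwards [Ioo_mem_nhdsGT_of_mem (Set.mem_Ico.2 ⟨le_refl 0, hε₀⟩)] with ε hε
    exact ⟨hε.1, le_of_lt hε.2⟩
  -- tendsto of numerator
  have hN : Tendsto (fun ε => ∑' n, a n * g ε n) (nhdsWithin 0 (Set.Ioi 0))
      (nhds (∑ n ∈ M, a n)) := by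
    rw [← htsumag0]
    apply tendsto_tsum_of_dominated_convergence hsum2
    · intro n; exact ((hpt n).const_mul (a n))
    · filter_upwards [hev] with ε ⟨hε, hεε⟩ n
      rw [norm_mul, Real.norm_eq_abs, Real.norm_eq_abs, abs_of_pos (Real.exp_pos _)]
      exact mul_le_mul_of_nonneg_left (hbound ε hε hεε n) (abs_nonneg _)
  -- tendsto of denominator
  have hD : Tendsto (fun ε => ∑' n, g ε n) (nhdsWithin 0 (Set.Ioi 0))
      (nhds (M.card : ℝ)) := by
    rw [← htsumg0]
    apply tendsto_tsum_of_dominated_convergence hsum1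
    · exact hpt
    · filter_upwards [hev] with ε ⟨hε, hεε⟩ n
      rw [Real.norm_eq_abs, abs_of_pos (Real.exp_pos _)]
      exact hbound ε hε hεε n
  have hcard : (M.card : ℝ) ≠ 0 := by
    simp [Finset.card_ne_zero_of_mem hMne.choose_spec]
  have hdiv := hN.div hD hcard
  have : (1 / (M.card : ℝ)) * ∑ n ∈ M, a n = (∑ n ∈ M, a n) / (M.card : ℝ) := by
    rw [one_div, inv_mul_eq_div]
  rw [this]
  apply hdiv.congr'
  filter_upwards [self_mem_nhdsWithin] with ε (hε : (0:ℝ) < ε)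
  have heq1 : ∑' n, a n * Real.exp (-(En n - E) ^ 2 / (2 * ε ^ 2)) =
      Real.exp (-d ^ 2 / (2 * ε ^ 2)) * ∑' n, a n * g ε n := by
    rw [← tsum_mul_left]
    congr 1; funext n; rw [hfact ε n]; ring
  have heq2 : ∑' n, Real.exp (-(En n - E) ^ 2 / (2 * ε ^ 2)) =
      Real.exp (-d ^ 2 / (2 * ε ^ 2)) * ∑' n, g ε n := by
    rw [← tsum_mul_left]
    congr 1; funext n; exact hfact ε n
  rw [heq1, heq2, mul_div_mul_left _ _ (Real.exp_ne_zero _)]; rfl
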